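/- For λ > 1, the triple integral ∫₀¹ ∫_{[a+2r,∞)²} (s₂a + s₁a + s₁s₂)^{−3/2} ds₁ ds₂ da equals −K·log(r) + O(1) as r ↓ 0, where K = ∫_{[1,∞)²} (α + β + αβ)^{−3/2} dα dβ is a finite positive constant; moreover K can be computed explicitly and the divergent part equals (1/3)·(1/(32π²))·|log r| after multiplication by (4π)^{−3}. -/

import Mathlib

/-
Integrating out `s₂` and then `s₁` in closed form (the second step has the antiderivative
`-(4/a) arctan (a / √((a + c₂) s + a c₂))`) gives, for `a, c₁, c₂ > 0`,
`∫_{s₁ ≥ c₁} ∫_{s₂ ≥ c₂} (s₂ a + s₁ a + s₁ s₂)^{-3/2} = (4/a) arctan (a / √(a c₁ + a c₂ + c₁ c₂))`.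
At `a = c₁ = c₂ = 1` this is `K = 4 arctan (1/√3) = 2π/3`. At `c₁ = c₂ = a + 2r` it is the
function `sunsetSlice r a`, which is at most `2/r` and differs from `K/a` by at most `4r/a²`,
because `√3 a ≤ √(3a² + 8ar + 4r²) ≤ √3 a + 3r` and `arctan` is 1-Lipschitz. Splitting `(0, 1]`
at `r`, both `∫₀^r sunsetSlice r` and `∫_r^1 (sunsetSlice r a - K/a) da` are bounded, while
`∫_r^1 K/a da = -K log r`.
-/
open MeasureTheory Real Set Filter Topology

noncomputable def sunsetConstant : ℝ :=
  ∫ α in Set.Ici (1:ℝ), ∫ β in Set.Ici (1:ℝ), (α + β + α * β) ^ (-(3:ℝ)/2)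

noncomputable def sunsetIntegral (r : ℝ) : ℝ :=
  ∫ a in Set.Ioc (0:ℝ) 1, ∫ s₁ in Set.Ici (a + 2*r), ∫ s₂ in Set.Ici (a + 2*r),
    (s₂ * a + s₁ * a + s₁ * s₂) ^ (-(3:ℝ)/2)

theorem integral_Ici_affine_rpow {p A B c : ℝ} (hp : p < -1) (hB : 0 < B)
    (hc : 0 < A + B * c) :
    ∫ s in Ici c, (A + B * s) ^ p = -(A + B * c) ^ (p + 1) / (B * (p + 1)) := by
  have hpos : ∀ s ∈ Ici c, 0 < A + B * s := fun s hs => by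
    nlinarith [mem_Ici.mp hs]
  have hderiv : ∀ s ∈ Ici c,
      HasDerivAt (fun s => (A + B * s) ^ (p + 1) / (B * (p + 1))) ((A + B * s) ^ p) s := by
    intro s hs
    have hlin : HasDerivAt (fun s => A + B * s) B s := by
      simpa using ((hasDerivAt_id s).const_mul B).const_add A
    refine ((hlin.rpow_const (Or.inl (hpos s hs).ne')).div_const _).congr_deriv ?_
    rw [add_sub_cancel_right]
    field_simp [show p + 1 ≠ 0 by linarith]
  have hlim : Tendsto (fun s => (A + B * s) ^ (p + 1) / (B * (p + 1))) atTop (𝓝 0) := by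
    have h := ((tendsto_rpow_neg_atTop (y := -(p + 1)) (by linarith)).comp
      (tendsto_atTop_add_const_left _ A (tendsto_id.const_mul_atTop hB))).div_const (B * (p + 1))
    simpa using h
  rw [integral_Ici_eq_integral_Ioi, integral_Ioi_of_hasDerivAt_of_nonneg' hderiv
    (fun s hs => (rpow_pos_of_pos (hpos s (Ioi_subset_Ici_self hs)) p).le) hlim]
  ring

theorem integral_Ici_two_div_mul_sqrt {a c₁ c₂ : ℝ} (ha : 0 < a) (hc₁ : 0 < c₁) (hc₂ : 0 < c₂) :
    ∫ s in Ici c₁, 2 / ((a + s) * √((a + c₂) * s + a * c₂)) =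
      4 / a * arctan (a / √(a * c₁ + a * c₂ + c₁ * c₂)) := by
  set u : ℝ → ℝ := fun s => (a + c₂) * s + a * c₂ with hu
  have hpos : ∀ s ∈ Ici c₁, 0 < u s := fun s hs => by
    simp only [hu]; nlinarith [mem_Ici.mp hs]
  have hderiv : ∀ s ∈ Ici c₁, HasDerivAt (fun s => -(4 / a) * arctan (a / √(u s)))
      (2 / ((a + s) * √(u s))) s := by
    intro s hs
    have hus := hpos s hs
    have hlin : HasDerivAt u ((a + c₂) * 1) s :=
      ((hasDerivAt_id' s).const_mul (a + c₂)).add_const (a * c₂)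
    have hsqrt := (hasDerivAt_const s a).fun_div (hlin.sqrt hus.ne') (sqrt_pos.mpr hus).ne'
    refine (hsqrt.arctan.const_mul _).congr_deriv ?_
    have hsq : √(u s) ^ 2 = u s := sq_sqrt hus.le
    have hsum : u s + a ^ 2 = (a + c₂) * (a + s) := by simp only [hu]; ring
    have : 0 < a + s := by linarith [mem_Ici.mp hs]
    have : 0 < √(u s) := sqrt_pos.mpr hus
    field_simp
    rw [hsq, hsum]
    ring
  have hlim : Tendsto (fun s => -(4 / a) * arctan (a / √(u s))) atTop (𝓝 0) := by
    have hu_top : Tendsto u atTop atTop :=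
      tendsto_atTop_add_const_right _ _ (tendsto_id.const_mul_atTop (by linarith))
    have h := ((continuous_arctan.tendsto 0).comp ((tendsto_const_nhds (x := a)).div_atTop
      (tendsto_sqrt_atTop.comp hu_top))).const_mul (-(4 / a))
    simpa using h
  have hnonneg : ∀ s ∈ Ioi c₁, 0 ≤ 2 / ((a + s) * √(u s)) := fun s hs => by
    have : 0 < a + s := by linarith [mem_Ioi.mp hs]
    positivity
  rw [integral_Ici_eq_integral_Ioi, integral_Ioi_of_hasDerivAt_of_nonneg' hderiv hnonneg hlim]
  simp only [hu]
  ring_nf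

theorem integral_Ici_integral_Ici_rpow_neg_three_halves {a c₁ c₂ : ℝ} (ha : 0 < a)
    (hc₁ : 0 < c₁) (hc₂ : 0 < c₂) :
    ∫ s₁ in Ici c₁, ∫ s₂ in Ici c₂, (s₂ * a + s₁ * a + s₁ * s₂) ^ (-(3:ℝ)/2) =
      4 / a * arctan (a / √(a * c₁ + a * c₂ + c₁ * c₂)) := by
  rw [← integral_Ici_two_div_mul_sqrt ha hc₁ hc₂]
  refine setIntegral_congr_fun measurableSet_Ici fun s₁ hs₁ => ?_
  have hs₁ : 0 < s₁ := hc₁.trans_le hs₁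
  have hX : 0 < s₁ * a + (a + s₁) * c₂ := by positivity
  simp_rw [show ∀ s₂, s₂ * a + s₁ * a + s₁ * s₂ = s₁ * a + (a + s₁) * s₂ from fun _ => by ring]
  rw [integral_Ici_affine_rpow (by norm_num) (by positivity) hX,
    show s₁ * a + (a + s₁) * c₂ = (a + c₂) * s₁ + a * c₂ by ring,
    show -(3:ℝ)/2 + 1 = -(1/2) by norm_num, rpow_neg (by positivity), ← sqrt_eq_rpow]
  field_simp

theorem sunsetConstant_eq : sunsetConstant = 2 / 3 * π := by
  unfold sunsetConstant
  simp_rw [show ∀ α β : ℝ, α + β + α * β = β * 1 + α * 1 + α * β from fun _ _ => by ring]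
  rw [integral_Ici_integral_Ici_rpow_neg_three_halves one_pos one_pos one_pos]
  norm_num [arctan_inv_sqrt_three]
  ring

theorem integrableOn_Ici_one_prod_Ici_one_rpow_neg_three_halves :
    IntegrableOn (fun p : ℝ × ℝ => (p.1 + p.2 + p.1 * p.2) ^ (-(3:ℝ)/2)) (Ici 1 ×ˢ Ici 1) := by
  have h1 : IntegrableOn (fun x : ℝ => x ^ (-(3:ℝ)/2)) (Ici 1) :=
    (integrableOn_Ici_iff_integrableOn_Ioi).mpr <|
      integrableOn_Ioi_rpow_of_lt (by norm_num) one_pos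
  have hprod : IntegrableOn (fun p : ℝ × ℝ => p.1 ^ (-(3:ℝ)/2) * p.2 ^ (-(3:ℝ)/2))
      (Ici 1 ×ˢ Ici 1) := by
    rw [IntegrableOn, Measure.volume_eq_prod, ← Measure.prod_restrict]
    exact h1.mul_prod h1
  refine hprod.mono' (by fun_prop : Measurable _).aestronglyMeasurable
    (ae_restrict_of_forall_mem (measurableSet_Ici.prod measurableSet_Ici) ?_)
  rintro ⟨x, y⟩ ⟨hx, hy⟩
  have hx : (1:ℝ) ≤ x := hx
  have hy : (1:ℝ) ≤ y := hy
  have hxy : 0 < x * y := by positivity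
  rw [norm_of_nonneg (by positivity), ← mul_rpow (by positivity) (by positivity)]
  exact rpow_le_rpow_of_nonpos hxy (by nlinarith) (by norm_num)

namespace Real

theorem lipschitzWith_arctan : LipschitzWith 1 arctan :=
  lipschitzWith_of_nnnorm_deriv_le differentiable_arctan fun x => by
    rw [Real.deriv_arctan, ← NNReal.coe_le_coe, coe_nnnorm, NNReal.coe_one,
      norm_of_nonneg (by positivity)]
    exact div_le_one_of_le₀ (by nlinarith) (by positivity)

theorem abs_arctan_sub_arctan_le (x y : ℝ) : |arctan x - arctan y| ≤ |x - y| := by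
  simpa [Real.dist_eq] using lipschitzWith_arctan.dist_le_mul x y

theorem arctan_le_self {x : ℝ} (hx : 0 ≤ x) : arctan x ≤ x := by
  have h := abs_arctan_sub_arctan_le x 0
  rw [arctan_zero, sub_zero, sub_zero, abs_of_nonneg hx] at h
  exact (le_abs_self _).trans h

end Real

noncomputable def sunsetSlice (r a : ℝ) : ℝ :=
  4 / a * arctan (a / √(3 * a ^ 2 + 8 * a * r + 4 * r ^ 2))

theorem sunsetIntegral_eq_integral_sunsetSlice {r : ℝ} (hr : 0 ≤ r) :
    sunsetIntegral r = ∫ a in (0:ℝ)..1, sunsetSlice r a := by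
  rw [intervalIntegral.integral_of_le zero_le_one]
  refine setIntegral_congr_fun measurableSet_Ioc fun a ha => ?_
  have hc : 0 < a + 2 * r := by linarith [ha.1]
  rw [integral_Ici_integral_Ici_rpow_neg_three_halves ha.1 hc hc, sunsetSlice]
  ring_nf

theorem sunsetSlice_nonneg {r a : ℝ} (ha : 0 ≤ a) : 0 ≤ sunsetSlice r a :=
  mul_nonneg (by positivity) (arctan_nonneg.mpr (by positivity))

theorem sunsetSlice_le {r a : ℝ} (hr : 0 < r) (ha : 0 < a) : sunsetSlice r a ≤ 2 / r := by
  have hs : 2 * r ≤ √(3 * a ^ 2 + 8 * a * r + 4 * r ^ 2) :=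
    le_sqrt_of_sq_le (by nlinarith)
  have harctan : arctan (a / √(3 * a ^ 2 + 8 * a * r + 4 * r ^ 2)) ≤
      a / √(3 * a ^ 2 + 8 * a * r + 4 * r ^ 2) :=
    arctan_le_self (by positivity)
  calc sunsetSlice r a ≤ 4 / a * (a / √(3 * a ^ 2 + 8 * a * r + 4 * r ^ 2)) :=
        mul_le_mul_of_nonneg_left harctan (by positivity)
    _ = 4 / √(3 * a ^ 2 + 8 * a * r + 4 * r ^ 2) := by field_simp
    _ ≤ 4 / (2 * r) := div_le_div_of_nonneg_left (by norm_num) (by positivity) hs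
    _ = 2 / r := by field_simp; norm_num

theorem abs_div_sqrt_sub_inv_sqrt_three_le {r a : ℝ} (hr : 0 ≤ r) (ha : 0 < a) :
    |a / √(3 * a ^ 2 + 8 * a * r + 4 * r ^ 2) - (√3)⁻¹| ≤ r / a := by
  set s := √(3 * a ^ 2 + 8 * a * r + 4 * r ^ 2)
  have hu : 0 < √3 := by positivity
  have hu2 : √3 ^ 2 = 3 := sq_sqrt (by norm_num)
  have hlower : √3 * a ≤ s := le_sqrt_of_sq_le (by nlinarith)
  have h43 : 4 / 3 ≤ √3 := by nlinarith
  have hupper : s ≤ √3 * a + 3 * r := sqrt_le_iff.mpr ⟨by positivity,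
    by nlinarith [mul_le_mul_of_nonneg_right h43 (mul_nonneg ha.le hr)]⟩
  have hs : 0 < s := by positivity
  rw [abs_sub_comm, abs_of_nonneg, inv_eq_one_div, div_sub_div _ _ hu.ne' hs.ne',
    div_le_div_iff₀ (by positivity) ha]
  · have h1 := mul_le_mul_of_nonneg_right (sub_le_iff_le_add'.mpr hupper) ha.le
    have h2 := mul_le_mul_of_nonneg_left hlower (mul_nonneg hr hu.le)
    have h3 : r * √3 * (√3 * a) = 3 * r * a := by linear_combination r * a * hu2
    linarith
  · rw [sub_nonneg, div_le_iff₀ hs]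
    field_simp
    linarith

theorem abs_sunsetSlice_sub_le {r a : ℝ} (hr : 0 ≤ r) (ha : 0 < a) :
    |sunsetSlice r a - 2 / 3 * π * a⁻¹| ≤ 4 * r / a ^ 2 := by
  have hK : 2 / 3 * π * a⁻¹ = 4 / a * arctan (√3)⁻¹ := by
    rw [arctan_inv_sqrt_three]; field_simp; ring
  rw [hK, sunsetSlice, ← mul_sub, abs_mul, abs_of_pos (by positivity : 0 < 4 / a)]
  calc 4 / a * |arctan (a / √(3 * a ^ 2 + 8 * a * r + 4 * r ^ 2)) - arctan (√3)⁻¹|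
      ≤ 4 / a * (r / a) := mul_le_mul_of_nonneg_left ((abs_arctan_sub_arctan_le _ _).trans
        (abs_div_sqrt_sub_inv_sqrt_three_le hr ha)) (by positivity)
    _ = 4 * r / a ^ 2 := by field_simp

theorem intervalIntegrable_sunsetSlice {r : ℝ} (hr : 0 < r) :
    IntervalIntegrable (sunsetSlice r) volume 0 1 := by
  rw [intervalIntegrable_iff_integrableOn_Ioc_of_le zero_le_one]
  refine Measure.integrableOn_of_bounded (M := 2 / r) measure_Ioc_lt_top.ne
    (by unfold sunsetSlice; fun_prop) (ae_restrict_of_forall_mem measurableSet_Ioc fun a ha => ?_)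
  rw [norm_of_nonneg (sunsetSlice_nonneg ha.1.le)]
  exact sunsetSlice_le hr ha.1

theorem abs_integral_sunsetSlice_le {r : ℝ} (hr : 0 < r) :
    |∫ a in (0:ℝ)..r, sunsetSlice r a| ≤ 2 := by
  have h := intervalIntegral.norm_integral_le_of_norm_le_const (a := 0) (b := r)
    (f := sunsetSlice r) (C := 2 / r) fun a ha => by
      rw [uIoc_of_le hr.le] at ha
      rw [norm_of_nonneg (sunsetSlice_nonneg ha.1.le)]
      exact sunsetSlice_le hr ha.1
  rwa [norm_eq_abs, sub_zero, abs_of_pos hr, div_mul_cancel₀ _ hr.ne'] at h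

theorem abs_integral_sunsetSlice_sub_le {r : ℝ} (hr : 0 < r) (hr1 : r ≤ 1) :
    |∫ a in r..1, (sunsetSlice r a - 2 / 3 * π * a⁻¹)| ≤ 4 := by
  have hpos : ∀ a ∈ uIcc r 1, 0 < a := fun a ha => hr.trans_le (uIcc_of_le hr1 ▸ ha).1
  have hbound : IntervalIntegrable (fun a : ℝ => 4 * r / a ^ 2) volume r 1 :=
    (continuousOn_const.div (continuousOn_pow 2) fun a ha =>
      pow_ne_zero 2 (hpos a ha).ne').intervalIntegrable
  have h := intervalIntegral.norm_integral_le_of_norm_le hr1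
    (f := fun a => sunsetSlice r a - 2 / 3 * π * a⁻¹)
    (Eventually.of_forall fun a ha => abs_sunsetSlice_sub_le hr.le (hr.trans ha.1)) hbound
  have hint : ∫ a in r..1, 4 * r / a ^ 2 = 4 - 4 * r := by
    rw [intervalIntegral.integral_eq_sub_of_hasDerivAt (f := fun a => -(4 * r) * a⁻¹)
      (fun a ha => ((hasDerivAt_inv (hpos a ha).ne').const_mul _).congr_deriv (by ring))
      hbound]
    field_simp
    ring
  rw [norm_eq_abs, hint] at h
  linarith

theorem abs_sunsetIntegral_add_log_le {r : ℝ} (hr : 0 < r) (hr1 : r ≤ 1) :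
    |sunsetIntegral r + 2 / 3 * π * log r| ≤ 6 := by
  have hf := intervalIntegrable_sunsetSlice hr
  have hf₁ : IntervalIntegrable (sunsetSlice r) volume 0 r := hf.mono_set <| by
    rw [uIcc_of_le hr.le, uIcc_of_le zero_le_one]; exact Icc_subset_Icc le_rfl hr1
  have hf₂ : IntervalIntegrable (sunsetSlice r) volume r 1 := hf.mono_set <| by
    rw [uIcc_of_le hr1, uIcc_of_le zero_le_one]; exact Icc_subset_Icc hr.le le_rfl
  have hinv : IntervalIntegrable (fun a : ℝ => a⁻¹) volume r 1 :=
    intervalIntegral.intervalIntegrable_inv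
      (fun a ha => (hr.trans_le (uIcc_of_le hr1 ▸ ha).1).ne') continuousOn_id
  have hlog : ∫ a in r..1, 2 / 3 * π * a⁻¹ = -(2 / 3 * π * log r) := by
    rw [intervalIntegral.integral_const_mul, integral_inv_of_pos hr one_pos, one_div, log_inv,
      mul_neg]
  have hsplit : sunsetIntegral r + 2 / 3 * π * log r =
      (∫ a in (0:ℝ)..r, sunsetSlice r a) + ∫ a in r..1, (sunsetSlice r a - 2 / 3 * π * a⁻¹) := by
    rw [sunsetIntegral_eq_integral_sunsetSlice hr.le,
      ← intervalIntegral.integral_add_adjacent_intervals hf₁ hf₂,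
      intervalIntegral.integral_sub hf₂ (hinv.const_mul _), hlog]
    ring
  rw [hsplit]
  linarith [abs_add_le (∫ a in (0:ℝ)..r, sunsetSlice r a)
      (∫ a in r..1, (sunsetSlice r a - 2 / 3 * π * a⁻¹)),
    abs_integral_sunsetSlice_le hr, abs_integral_sunsetSlice_sub_le hr hr1]

/-- The triple integral equals `-K log r + O(1)` as `r ↓ 0`, where
`K = ∫_{[1,∞)²}(α+β+αβ)^{-3/2}` is finite and positive; moreover
`(4π)^{-3} K = (1/3)(1/(32π²))`, identifying the divergent part of the counterterm. -/
theorem sunset_counterterm_divergence :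
    (IntegrableOn (fun p : ℝ × ℝ => (p.1 + p.2 + p.1 * p.2) ^ (-(3:ℝ)/2))
      (Set.Ici 1 ×ˢ Set.Ici 1)) ∧
    0 < sunsetConstant ∧
    ((4 * Real.pi) ^ 3)⁻¹ * sunsetConstant = 1 / (3 * (32 * Real.pi ^ 2)) ∧
    ∃ Cbd : ℝ, ∀ r ∈ Set.Ioc (0:ℝ) 1,
      |sunsetIntegral r + sunsetConstant * Real.log r| ≤ Cbd := by
  rw [sunsetConstant_eq]
  refine ⟨integrableOn_Ici_one_prod_Ici_one_rpow_neg_three_halves, by positivity,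
    by field_simp; ring, 6, fun r hr => abs_sunsetIntegral_add_log_le hr.1 hr.2⟩
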